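/- arXiv:2511.02297 — 4 statements merged into one kernel-verified Lean document; each statement's English description precedes it below -/
import Mathlib

section
/- For every α ∈ (0,1)∪(1,∞), the two-parameter Rényi conditional entropy at β = 1 equals Arimoto's Rényi conditional entropy: H̃_{α,1}(X|Y) = H*_α(X|Y), i.e. (α/(1−α)) · log( Σ_{y: P_Y(y)>0} P_Y(y) (Σ_x P_{X|Y}(x|y)^α)^{1/α} ) = − min_{Q_Y ∈ 𝒫(𝒴)} D_α(P_XY ‖ 𝟙_𝒳 × Q_Y), where the minimum is over all probability distributions Q_Y on 𝒴 and 𝟙_𝒳 × Q_Y denotes the nonnegative function (x,y) ↦ Q_Y(y) on 𝒳×𝒴. -/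
open scoped BigOperators

noncomputable section

variable {𝓧 𝓨 : Type*} [Fintype 𝓧] [Fintype 𝓨]

/-- Marginal distribution of the second component. -/
def pY (P : 𝓧 × 𝓨 → ℝ) (y : 𝓨) : ℝ := ∑ x, P (x, y)

/-- Conditional distribution `P_{X|Y}(x|y)`. -/
def pCond (P : 𝓧 × 𝓨 → ℝ) (x : 𝓧) (y : 𝓨) : ℝ := P (x, y) / pY P y

/-- Two-parameter Rényi conditional entropy `H̃_{α,β}(X|Y)`. -/
def Htilde (P : 𝓧 × 𝓨 → ℝ) (α β : ℝ) : ℝ :=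
  α / (β * (1 - α)) *
    Real.logb 2 (∑ y, if 0 < pY P y then
      pY P y * (∑ x, pCond P x y ^ α) ^ (β / α) else 0)

/-- Order-`α` Rényi divergence of a probability distribution `P` with respect to a
nonnegative function `Q`, with the convention that it is `+∞` when `α > 1` and `P`
is not absolutely continuous with respect to `Q`. -/
def renyiDiv {𝓩 : Type*} [Fintype 𝓩] (α : ℝ) (P Q : 𝓩 → ℝ) : EReal :=
  if 1 < α ∧ ∃ z, Q z = 0 ∧ P z ≠ 0 then ⊤
  else ((1 / (α - 1)) *
    Real.logb 2 (∑ z, if 0 < P z then P z ^ α * Q z ^ (1 - α) else 0) : ℝ)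

/-!
Summing out `x`, the sum inside `D_α(P_XY ‖ 𝟙 × Q)` becomes `∑ y, c y * Q y ^ (1 - α)` with
`c y = ∑ x, P (x, y) ^ α`. Put `S = ∑ y, c y ^ (1/α)` and let `e = c ^ (1/α) / S` be the escort
distribution, so that `c = S ^ α * e ^ α` and the sum is `S ^ α * ∑ y, e y ^ α * Q y ^ (1 - α)`.
By Hölder's inequality the last sum is `≤ 1` for `α < 1` and `≥ 1` for `α > 1` (when `e ≪ Q`),
with equality at `Q = e`; hence `min_Q D_α = α / (α - 1) * log S`. On the other side
`c y ^ (1/α) = P_Y(y) * ‖P_{X|Y}(·|y)‖_α`, so `H̃_{α,1} = α / (1 - α) * log S`.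
-/

open Finset Real

section RenyiSum

variable {ι : Type*} [Fintype ι]

theorem sum_rpow_mul_rpow_one_sub_le {a b : ι → ℝ} (ha : ∀ i, 0 ≤ a i) (hb : ∀ i, 0 ≤ b i)
    {θ : ℝ} (hθ₀ : 0 < θ) (hθ₁ : θ < 1) :
    ∑ i, a i ^ θ * b i ^ (1 - θ) ≤ (∑ i, a i) ^ θ * (∑ i, b i) ^ (1 - θ) := by
  have hθ' : 1 - θ ≠ 0 := sub_ne_zero.mpr hθ₁.ne'
  have h := inner_le_Lp_mul_Lq_of_nonneg univ (HolderConjugate.inv_one_sub_inv hθ₀ hθ₁)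
    (f := fun i => a i ^ θ) (g := fun i => b i ^ (1 - θ))
    (fun i _ => rpow_nonneg (ha i) _) (fun i _ => rpow_nonneg (hb i) _)
  simpa only [rpow_rpow_inv (ha _) hθ₀.ne', rpow_rpow_inv (hb _) hθ', one_div, inv_inv] using h

theorem one_le_sum_rpow_of_le_one {p : ι → ℝ} (hp : ∀ i, 0 ≤ p i)
    (hp₁ : ∑ i, p i = 1) {α : ℝ} (hα : α ≤ 1) : 1 ≤ ∑ i, p i ^ α :=
  hp₁ ▸ sum_le_sum fun i _ => self_le_rpow_of_le_one (hp i)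
    (hp₁ ▸ single_le_sum (fun j _ => hp j) (mem_univ i)) hα

variable {p q : ι → ℝ} (hp : ∀ i, 0 ≤ p i) (hq : ∀ i, 0 ≤ q i) (hp₁ : ∑ i, p i = 1)
  (hq₁ : ∑ i, q i = 1)
include hp hq hp₁ hq₁

theorem sum_rpow_mul_rpow_one_sub_le_one {α : ℝ} (hα₀ : 0 < α) (hα₁ : α < 1) :
    ∑ i, p i ^ α * q i ^ (1 - α) ≤ 1 := by
  simpa [hp₁, hq₁] using sum_rpow_mul_rpow_one_sub_le hp hq hα₀ hα₁

theorem one_le_sum_rpow_mul_rpow_one_sub {α : ℝ} (hα : 1 < α) (hpq : ∀ i, q i = 0 → p i = 0) :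
    1 ≤ ∑ i, p i ^ α * q i ^ (1 - α) := by
  have hα₀ : α ≠ 0 := by positivity
  have hsplit : ∀ i, p i = (p i ^ α * q i ^ (1 - α)) ^ α⁻¹ * q i ^ (1 - α⁻¹) := by
    intro i
    rcases (hq i).eq_or_lt with h0 | hpos
    · rw [hpq i h0.symm, zero_rpow hα₀, zero_mul, zero_rpow (inv_ne_zero hα₀), zero_mul]
    · rw [mul_rpow (rpow_nonneg (hp i) _) (rpow_nonneg hpos.le _), rpow_rpow_inv (hp i) hα₀,
        ← rpow_mul hpos.le, mul_assoc, ← rpow_add hpos]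
      have : (1 - α) * α⁻¹ + (1 - α⁻¹) = 0 := by field_simp; ring
      rw [this, rpow_zero, mul_one]
  have hT : 1 ≤ (∑ i, p i ^ α * q i ^ (1 - α)) ^ α⁻¹ := by
    calc 1 = ∑ i, (p i ^ α * q i ^ (1 - α)) ^ α⁻¹ * q i ^ (1 - α⁻¹) :=
          hp₁.symm.trans (sum_congr rfl fun i _ => hsplit i)
      _ ≤ (∑ i, p i ^ α * q i ^ (1 - α)) ^ α⁻¹ * (∑ i, q i) ^ (1 - α⁻¹) :=
          sum_rpow_mul_rpow_one_sub_le (fun i => mul_nonneg (rpow_nonneg (hp i) _)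
            (rpow_nonneg (hq i) _)) hq (by positivity) (inv_lt_one_of_one_lt₀ hα)
      _ = _ := by rw [hq₁, one_rpow, mul_one]
  by_contra! h
  exact (rpow_lt_one (sum_nonneg fun i _ => mul_nonneg (rpow_nonneg (hp i) _)
    (rpow_nonneg (hq i) _)) h (by positivity)).not_ge hT

end RenyiSum

section Escort

variable {ι : Type*} [Fintype ι]

def escort (c : ι → ℝ) (s : ℝ) (i : ι) : ℝ := c i ^ s / ∑ j, c j ^ s

variable {c : ι → ℝ} (hc : ∀ i, 0 ≤ c i)
include hc

theorem escort_nonneg (s : ℝ) (i : ι) : 0 ≤ escort c s i :=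
  div_nonneg (rpow_nonneg (hc i) s) (sum_nonneg fun j _ => rpow_nonneg (hc j) s)

omit hc in
theorem sum_escort {s : ℝ} (h : ∑ j, c j ^ s ≠ 0) : ∑ i, escort c s i = 1 := by
  simp only [escort, ← sum_div, div_self h]

theorem eq_zero_of_escort_eq_zero {s : ℝ} (hs : s ≠ 0) (h : 0 < ∑ j, c j ^ s) {i : ι}
    (hi : escort c s i = 0) : c i = 0 :=
  (rpow_eq_zero (hc i) hs).mp ((div_eq_zero_iff.mp hi).resolve_right h.ne')

variable {α : ℝ} (hα : α ≠ 0) (hS : 0 < ∑ i, c i ^ α⁻¹)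
include hα hS

theorem rpow_mul_escort_rpow (i : ι) :
    (∑ j, c j ^ α⁻¹) ^ α * escort c α⁻¹ i ^ α = c i := by
  rw [escort, div_rpow (rpow_nonneg (hc i) _) hS.le, rpow_inv_rpow (hc i) hα,
    mul_div_cancel₀ _ (rpow_pos_of_pos hS α).ne']

theorem sum_mul_rpow_one_sub_eq (q : ι → ℝ) :
    ∑ i, c i * q i ^ (1 - α) =
      (∑ j, c j ^ α⁻¹) ^ α * ∑ i, escort c α⁻¹ i ^ α * q i ^ (1 - α) := by
  rw [mul_sum]
  refine sum_congr rfl fun i _ => ?_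
  rw [← mul_assoc, rpow_mul_escort_rpow hc hα hS]

theorem sum_mul_escort_rpow_one_sub :
    ∑ i, c i * escort c α⁻¹ i ^ (1 - α) = (∑ j, c j ^ α⁻¹) ^ α := by
  have hmul : ∀ i, escort c α⁻¹ i ^ α * escort c α⁻¹ i ^ (1 - α) = escort c α⁻¹ i := fun i => by
    rw [← rpow_add' (escort_nonneg hc _ i) (by norm_num), add_sub_cancel, rpow_one]
  rw [sum_mul_rpow_one_sub_eq hc hα hS, sum_congr rfl fun i _ => hmul i,
    sum_escort hS.ne', mul_one]

variable {q : ι → ℝ} (hq : ∀ i, 0 ≤ q i) (hq₁ : ∑ i, q i = 1)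
include hq hq₁

theorem sum_mul_rpow_one_sub_le_of_lt_one (hα₀ : 0 < α) (hα₁ : α < 1) :
    ∑ i, c i * q i ^ (1 - α) ≤ (∑ j, c j ^ α⁻¹) ^ α := by
  rw [sum_mul_rpow_one_sub_eq hc hα hS]
  exact mul_le_of_le_one_right (rpow_nonneg hS.le α) <|
    sum_rpow_mul_rpow_one_sub_le_one (escort_nonneg hc _) hq (sum_escort hS.ne') hq₁ hα₀ hα₁

theorem le_sum_mul_rpow_one_sub_of_one_lt (hα₁ : 1 < α) (hcq : ∀ i, q i = 0 → c i = 0) :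
    (∑ j, c j ^ α⁻¹) ^ α ≤ ∑ i, c i * q i ^ (1 - α) := by
  have hescort : ∀ i, q i = 0 → escort c α⁻¹ i = 0 := fun i hi => by
    rw [escort, hcq i hi, zero_rpow (inv_ne_zero hα), zero_div]
  rw [sum_mul_rpow_one_sub_eq hc hα hS]
  exact le_mul_of_one_le_right (rpow_nonneg hS.le α) <|
    one_le_sum_rpow_mul_rpow_one_sub (escort_nonneg hc _) hq (sum_escort hS.ne') hq₁ hα₁ hescort

end Escort

def powMarginal (P : 𝓧 × 𝓨 → ℝ) (α : ℝ) (y : 𝓨) : ℝ := ∑ x, P (x, y) ^ α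

section Conditional

variable {P : 𝓧 × 𝓨 → ℝ} {α : ℝ}

theorem sum_pY (P : 𝓧 × 𝓨 → ℝ) : ∑ y, pY P y = ∑ p, P p :=
  (Fintype.sum_prod_type_right P).symm

omit [Fintype 𝓨] in
theorem sum_pCond {y : 𝓨} (h : pY P y ≠ 0) : ∑ x, pCond P x y = 1 := by
  simp only [pCond, ← sum_div]
  exact div_self h

variable (hP : ∀ p, 0 ≤ P p)
include hP

omit [Fintype 𝓨] in
theorem pY_nonneg (y : 𝓨) : 0 ≤ pY P y := sum_nonneg fun x _ => hP (x, y)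

omit [Fintype 𝓨] in
theorem pCond_nonneg (x : 𝓧) (y : 𝓨) : 0 ≤ pCond P x y := div_nonneg (hP _) (pY_nonneg hP y)

omit [Fintype 𝓨] in
theorem pY_eq_zero_iff {y : 𝓨} : pY P y = 0 ↔ ∀ x, P (x, y) = 0 := by
  simp [pY, sum_eq_zero_iff_of_nonneg fun x _ => hP (x, y)]

omit [Fintype 𝓨] in
theorem powMarginal_nonneg (α : ℝ) (y : 𝓨) : 0 ≤ powMarginal P α y :=
  sum_nonneg fun _ _ => rpow_nonneg (hP _) α

omit [Fintype 𝓨] in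
theorem powMarginal_eq_zero_iff (hα : α ≠ 0) {y : 𝓨} :
    powMarginal P α y = 0 ↔ ∀ x, P (x, y) = 0 := by
  simp [powMarginal, sum_eq_zero_iff_of_nonneg fun x _ => rpow_nonneg (hP (x, y)) α,
    rpow_eq_zero (hP _) hα]

omit [Fintype 𝓨] in
theorem powMarginal_rpow_inv (hα : α ≠ 0) (y : 𝓨) :
    powMarginal P α y ^ α⁻¹ = pY P y * (∑ x, pCond P x y ^ α) ^ α⁻¹ := by
  rcases (pY_nonneg hP y).eq_or_lt with h0 | hpos
  · rw [← h0, ((powMarginal_eq_zero_iff hP hα).mpr ((pY_eq_zero_iff hP).mp h0.symm)),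
      zero_rpow (inv_ne_zero hα), zero_mul]
  · have hfactor : powMarginal P α y = pY P y ^ α * ∑ x, pCond P x y ^ α := by
      rw [powMarginal, mul_sum]
      refine sum_congr rfl fun x _ => ?_
      rw [← mul_rpow hpos.le (pCond_nonneg hP x y), pCond, mul_div_cancel₀ _ hpos.ne']
    rw [hfactor, mul_rpow (rpow_nonneg hpos.le α) (sum_nonneg fun x _ =>
      rpow_nonneg (pCond_nonneg hP x y) α), rpow_rpow_inv hpos.le hα]

theorem Htilde_one_eq (hα : α ≠ 0) :
    Htilde P α 1 = α / (1 - α) * logb 2 (∑ y, powMarginal P α y ^ α⁻¹) := by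
  simp only [Htilde, one_mul, one_div, powMarginal_rpow_inv hP hα]
  congr 2
  refine sum_congr rfl fun y _ => ?_
  rw [ite_eq_left_iff, not_lt]
  intro h
  rw [le_antisymm h (pY_nonneg hP y), zero_mul]

theorem sum_pos_rpow_mul_rpow_snd (hα : α ≠ 0) (Q : 𝓨 → ℝ) :
    (∑ p, if 0 < P p then P p ^ α * Q p.2 ^ (1 - α) else 0) =
      ∑ y, powMarginal P α y * Q y ^ (1 - α) := by
  rw [Fintype.sum_prod_type_right]
  refine sum_congr rfl fun y _ => ?_
  rw [powMarginal, sum_mul]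
  refine sum_congr rfl fun x _ => ?_
  rw [ite_eq_left_iff, not_lt]
  intro h
  rw [le_antisymm h (hP _), zero_rpow hα, zero_mul]

theorem renyiDiv_comp_snd (hα : α ≠ 0) (Q : 𝓨 → ℝ) :
    renyiDiv α P (fun p => Q p.2) =
      if 1 < α ∧ ∃ y, Q y = 0 ∧ powMarginal P α y ≠ 0 then ⊤
      else ((1 / (α - 1) * logb 2 (∑ y, powMarginal P α y * Q y ^ (1 - α)) : ℝ) : EReal) := by
  have hsupp : (∃ p : 𝓧 × 𝓨, Q p.2 = 0 ∧ P p ≠ 0) ↔ ∃ y, Q y = 0 ∧ powMarginal P α y ≠ 0 := by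
    simp only [Ne, powMarginal_eq_zero_iff hP hα, not_forall, Prod.exists]
    exact ⟨fun ⟨x, y, hQ, hPxy⟩ => ⟨y, hQ, x, hPxy⟩, fun ⟨y, hQ, x, hPxy⟩ => ⟨x, y, hQ, hPxy⟩⟩
  simp only [renyiDiv, hsupp, sum_pos_rpow_mul_rpow_snd hP hα]

theorem sum_powMarginal_rpow_inv_pos (hPsum : ∑ p, P p = 1) (hα : α ≠ 0) :
    0 < ∑ y, powMarginal P α y ^ α⁻¹ := by
  obtain ⟨p, -, hp⟩ := exists_ne_zero_of_sum_ne_zero (hPsum ▸ one_ne_zero : ∑ p, P p ≠ 0)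
  have hy : powMarginal P α p.2 ≠ 0 := fun h => hp ((powMarginal_eq_zero_iff hP hα).mp h p.1)
  refine sum_pos' (fun y _ => rpow_nonneg (powMarginal_nonneg hP α y) _) ⟨p.2, mem_univ _, ?_⟩
  exact (rpow_pos_of_pos ((powMarginal_nonneg hP α _).lt_of_ne' hy) _)

theorem one_le_sum_powMarginal_rpow_inv (hPsum : ∑ p, P p = 1) (hα₀ : 0 < α) (hα₁ : α ≤ 1) :
    1 ≤ ∑ y, powMarginal P α y ^ α⁻¹ := by
  rw [← hPsum, ← sum_pY]
  refine sum_le_sum fun y _ => ?_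
  rw [powMarginal_rpow_inv hP hα₀.ne']
  rcases (pY_nonneg hP y).eq_or_lt with h0 | hpos
  · rw [← h0, zero_mul]
  · exact le_mul_of_one_le_right hpos.le <| one_le_rpow (one_le_sum_rpow_of_le_one
      (fun x => pCond_nonneg hP x y) (sum_pCond hpos.ne') hα₁) (inv_nonneg.mpr hα₀.le)

theorem le_renyiDiv_comp_snd (hPsum : ∑ p, P p = 1) (hα₀ : 0 < α) (hα₁ : α ≠ 1) {Q : 𝓨 → ℝ}
    (hQ : ∀ y, 0 ≤ Q y) (hQ₁ : ∑ y, Q y = 1) :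
    ((α / (α - 1) * logb 2 (∑ y, powMarginal P α y ^ α⁻¹) : ℝ) : EReal) ≤
      renyiDiv α P (fun p => Q p.2) := by
  set S := ∑ y, powMarginal P α y ^ α⁻¹
  set T := ∑ y, powMarginal P α y * Q y ^ (1 - α)
  have hS : 0 < S := sum_powMarginal_rpow_inv_pos hP hPsum hα₀.ne'
  have hc := powMarginal_nonneg hP α
  have hlogb : α / (α - 1) * logb 2 S = 1 / (α - 1) * logb 2 (S ^ α) := by
    rw [logb_rpow_eq_mul_logb_of_pos hS]; ring
  rw [renyiDiv_comp_snd hP hα₀.ne']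
  split_ifs with hsupp
  · exact le_top
  rw [EReal.coe_le_coe_iff]
  rcases hα₁.lt_or_gt with hlt | hgt
  · have hTS : T ≤ S ^ α := sum_mul_rpow_one_sub_le_of_lt_one hc hα₀.ne' hS hQ hQ₁ hα₀ hlt
    have hcoef : 1 / (α - 1) < 0 := one_div_neg.mpr (sub_neg.mpr hlt)
    rcases (sum_nonneg fun y _ => mul_nonneg (hc y) (rpow_nonneg (hQ y) _) : 0 ≤ T).eq_or_lt
      with hT0 | hTpos
    · -- junk value `logb 2 0 = 0`; the bound survives because `1 ≤ S` when `α < 1`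
      rw [← hT0, logb_zero, mul_zero]
      exact mul_nonpos_of_nonpos_of_nonneg (div_nonpos_of_nonneg_of_nonpos hα₀.le (by linarith))
        (logb_nonneg one_lt_two (one_le_sum_powMarginal_rpow_inv hP hPsum hα₀ hlt.le))
    · rw [hlogb]
      exact mul_le_mul_of_nonpos_left (logb_le_logb_of_le one_lt_two hTpos hTS) hcoef.le
  · have hcQ : ∀ y, Q y = 0 → powMarginal P α y = 0 := by
      simpa [hgt] using hsupp
    have hST : S ^ α ≤ T := le_sum_mul_rpow_one_sub_of_one_lt hc hα₀.ne' hS hQ hQ₁ hgt hcQ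
    rw [hlogb]
    exact mul_le_mul_of_nonneg_left
      (logb_le_logb_of_le one_lt_two (rpow_pos_of_pos hS α) hST)
      (one_div_nonneg.mpr (sub_nonneg.mpr hgt.le))

theorem renyiDiv_comp_snd_escort (hPsum : ∑ p, P p = 1) (hα : α ≠ 0) :
    renyiDiv α P (fun p => escort (powMarginal P α) α⁻¹ p.2) =
      ((α / (α - 1) * logb 2 (∑ y, powMarginal P α y ^ α⁻¹) : ℝ) : EReal) := by
  have hS := sum_powMarginal_rpow_inv_pos hP hPsum hα
  have hc := powMarginal_nonneg hP α
  have hsupp : ¬ (1 < α ∧ ∃ y, escort (powMarginal P α) α⁻¹ y = 0 ∧ powMarginal P α y ≠ 0) :=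
    fun ⟨_, y, hy, hcy⟩ => hcy (eq_zero_of_escort_eq_zero hc (inv_ne_zero hα) hS hy)
  rw [renyiDiv_comp_snd hP hα, if_neg hsupp, sum_mul_escort_rpow_one_sub hc hα hS,
    logb_rpow_eq_mul_logb_of_pos hS]
  congr 1
  ring

end Conditional

theorem Htilde_beta_one_eq_arimoto_general
    (P : 𝓧 × 𝓨 → ℝ) (hP : ∀ p, 0 ≤ P p) (hPsum : ∑ p, P p = 1)
    (α : ℝ) (hα : 0 < α) (hα1 : α ≠ 1) :
    (Htilde P α 1 : EReal) =
      - ⨅ Q : {Q : 𝓨 → ℝ // (∀ y, 0 ≤ Q y) ∧ ∑ y, Q y = 1},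
          renyiDiv α P (fun p : 𝓧 × 𝓨 => Q.1 p.2) := by
  have hS := sum_powMarginal_rpow_inv_pos hP hPsum hα.ne'
  have hinf : (⨅ Q : {Q : 𝓨 → ℝ // (∀ y, 0 ≤ Q y) ∧ ∑ y, Q y = 1},
      renyiDiv α P (fun p : 𝓧 × 𝓨 => Q.1 p.2)) =
      ((α / (α - 1) * logb 2 (∑ y, powMarginal P α y ^ α⁻¹) : ℝ) : EReal) :=
    le_antisymm
      (iInf_le_of_le ⟨escort (powMarginal P α) α⁻¹,
          escort_nonneg (powMarginal_nonneg hP α) _, sum_escort hS.ne'⟩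
        (renyiDiv_comp_snd_escort hP hPsum hα.ne').le)
      (le_iInf fun Q => le_renyiDiv_comp_snd hP hPsum hα hα1 Q.2.1 Q.2.2)
  rw [hinf, Htilde_one_eq hP hα.ne', ← EReal.coe_neg, ← neg_mul, ← div_neg, neg_sub]

/-- `H̃_{α,1}(X|Y) = H*_α(X|Y)`, Arimoto's Rényi conditional entropy. -/
theorem Htilde_beta_one_eq_arimoto
    [Nonempty 𝓧] [Nonempty 𝓨]
    (P : 𝓧 × 𝓨 → ℝ) (hP : ∀ p, 0 ≤ P p) (hPsum : ∑ p, P p = 1)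
    (α : ℝ) (hα : 0 < α) (hα1 : α ≠ 1) :
    (Htilde P α 1 : EReal) =
      - ⨅ Q : {Q : 𝓨 → ℝ // (∀ y, 0 ≤ Q y) ∧ ∑ y, Q y = 1},
          renyiDiv α P (fun p : 𝓧 × 𝓨 => Q.1 p.2) :=
  Htilde_beta_one_eq_arimoto_general P hP hPsum α hα hα1
end
end

section
/- For every fixed β ∈ (0,∞), the map α ↦ H̃_{α,β}(X|Y) is non-increasing on (0,∞): for all 0 < b ≤ a < ∞, H̃_{a,β}(X|Y) ≤ H̃_{b,β}(X|Y), where at α = 1 the value is H̃_{1,β}(X|Y) = H(X|Y). -/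
open scoped BigOperators

/-- Jensen's inequality for `exp`. -/
lemma myJensenExp {ι : Type*} (s : Finset ι) (w a : ι → ℝ)
    (hw : ∀ i ∈ s, 0 ≤ w i) (hw1 : ∑ i ∈ s, w i = 1) :
    Real.exp (∑ i ∈ s, w i * a i) ≤ ∑ i ∈ s, w i * Real.exp (a i) := by
  have := convexOn_exp.map_sum_le (t := s) (w := w) (p := a) hw hw1
    (fun i _ => Set.mem_univ _)
  simpa using this

/-- Hölder's inequality, two-function weighted form. -/
lemma myHolder {ι : Type*} (s : Finset ι) (f g : ι → ℝ)
    (hf : ∀ i ∈ s, 0 ≤ f i) (hg : ∀ i ∈ s, 0 ≤ g i)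
    (u v : ℝ) (hu : 0 ≤ u) (hv : 0 ≤ v) (huv : u + v = 1) :
    ∑ i ∈ s, f i ^ u * g i ^ v ≤ (∑ i ∈ s, f i) ^ u * (∑ i ∈ s, g i) ^ v := by
  rcases eq_or_lt_of_le hu with hu0 | hupos
  · have hv1 : v = 1 := by linarith
    simp [← hu0, hv1]
  rcases eq_or_lt_of_le hv with hv0 | hvpos
  · have hu1 : u = 1 := by linarith
    simp [← hv0, hu1]
  have hF0 : 0 ≤ ∑ i ∈ s, f i := Finset.sum_nonneg hf
  have hG0 : 0 ≤ ∑ i ∈ s, g i := Finset.sum_nonneg hg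
  rcases eq_or_lt_of_le hF0 with hF | hFpos
  · have hz : ∀ i ∈ s, f i = 0 := (Finset.sum_eq_zero_iff_of_nonneg hf).1 hF.symm
    have h1 : ∑ i ∈ s, f i ^ u * g i ^ v = 0 := by
      apply Finset.sum_eq_zero; intro i hi
      rw [hz i hi, Real.zero_rpow (ne_of_gt hupos), zero_mul]
    rw [h1, ← hF, Real.zero_rpow (ne_of_gt hupos), zero_mul]
  rcases eq_or_lt_of_le hG0 with hG | hGpos
  · have hz : ∀ i ∈ s, g i = 0 := (Finset.sum_eq_zero_iff_of_nonneg hg).1 hG.symm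
    have h1 : ∑ i ∈ s, f i ^ u * g i ^ v = 0 := by
      apply Finset.sum_eq_zero; intro i hi
      rw [hz i hi, Real.zero_rpow (ne_of_gt hvpos), mul_zero]
    rw [h1, ← hG, Real.zero_rpow (ne_of_gt hvpos), mul_zero]
  set F := ∑ i ∈ s, f i with hF
  set G := ∑ i ∈ s, g i with hG
  have hFu : (0:ℝ) < F ^ u := Real.rpow_pos_of_pos hFpos u
  have hGv : (0:ℝ) < G ^ v := Real.rpow_pos_of_pos hGpos v
  calc ∑ i ∈ s, f i ^ u * g i ^ v
      = ∑ i ∈ s, ((f i / F) ^ u * (g i / G) ^ v) * (F ^ u * G ^ v) := by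
        apply Finset.sum_congr rfl; intro i hi
        rw [Real.div_rpow (hf i hi) hF0, Real.div_rpow (hg i hi) hG0]
        field_simp
    _ ≤ ∑ i ∈ s, (u * (f i / F) + v * (g i / G)) * (F ^ u * G ^ v) := by
        apply Finset.sum_le_sum; intro i hi
        apply mul_le_mul_of_nonneg_right
        · exact Real.geom_mean_le_arith_mean2_weighted hu hv
            (div_nonneg (hf i hi) hF0) (div_nonneg (hg i hi) hG0) huv
        · positivity
    _ = (∑ i ∈ s, (u * (f i / F) + v * (g i / G))) * (F ^ u * G ^ v) := by
        rw [← Finset.sum_mul]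
    _ = F ^ u * G ^ v := by
        have h1 : ∑ i ∈ s, (u * (f i / F) + v * (g i / G)) = 1 := by
          rw [Finset.sum_add_distrib, ← Finset.mul_sum, ← Finset.mul_sum,
            ← Finset.sum_div, ← Finset.sum_div, ← hF, ← hG,
            div_self (ne_of_gt hFpos), div_self (ne_of_gt hGpos), mul_one, mul_one, huv]
        rw [h1, one_mul]

/-- Tangent (Jensen) bound: `exp((α-1)·∑ q log q) ≤ ∑ qᵅ`. -/
lemma mySumRpowGe {ι : Type*} (s : Finset ι) (q : ι → ℝ)
    (hq : ∀ i ∈ s, 0 ≤ q i) (hq1 : ∑ i ∈ s, q i = 1) (α : ℝ) (hα : 0 < α) :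
    Real.exp ((α - 1) * ∑ i ∈ s, q i * Real.log (q i)) ≤ ∑ i ∈ s, q i ^ α := by
  have key : ∀ i ∈ s, q i * Real.exp ((α - 1) * Real.log (q i)) = q i ^ α := by
    intro i hi
    rcases eq_or_lt_of_le (hq i hi) with h0 | hpos
    · rw [← h0, Real.zero_rpow (ne_of_gt hα), zero_mul]
    · rw [Real.rpow_def_of_pos hpos, mul_comm (Real.log (q i)) α]
      nth_rewrite 1 [← Real.exp_log hpos]
      rw [← Real.exp_add]
      ring_nf
  calc Real.exp ((α - 1) * ∑ i ∈ s, q i * Real.log (q i))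
      = Real.exp (∑ i ∈ s, q i * ((α - 1) * Real.log (q i))) := by
        rw [Finset.mul_sum]; congr 1; apply Finset.sum_congr rfl; intro i _; ring
    _ ≤ ∑ i ∈ s, q i * Real.exp ((α - 1) * Real.log (q i)) := by
        have := convexOn_exp.map_sum_le (t := s) (w := q)
          (p := fun i => (α - 1) * Real.log (q i)) hq hq1 (fun i _ => Set.mem_univ _)
        simpa using this
    _ = ∑ i ∈ s, q i ^ α := Finset.sum_congr rfl key

/-- Interpolation: `∑ q^{αθ} ≤ (∑ q^α)^u` when `u·α + (1-u) = αθ`. -/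
lemma mySumRpowInterp {ι : Type*} (s : Finset ι) (q : ι → ℝ)
    (hq : ∀ i ∈ s, 0 ≤ q i) (hq1 : ∑ i ∈ s, q i = 1)
    (α αθ u : ℝ) (hα : 0 < α) (hαθ : 0 < αθ) (hu : 0 < u) (hu1 : u ≤ 1)
    (hrel : u * α + (1 - u) = αθ) :
    ∑ i ∈ s, q i ^ αθ ≤ (∑ i ∈ s, q i ^ α) ^ u := by
  have key : ∀ i ∈ s, q i ^ αθ = (q i ^ α) ^ u * q i ^ (1 - u) := by
    intro i hi
    rcases eq_or_lt_of_le (hq i hi) with h0 | hpos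
    · rw [← h0, Real.zero_rpow (ne_of_gt hα), Real.zero_rpow (ne_of_gt hαθ),
        Real.zero_rpow (ne_of_gt hu), zero_mul]
    · rw [← Real.rpow_mul (le_of_lt hpos), ← Real.rpow_add hpos]
      congr 1
      linarith [hrel]
  calc ∑ i ∈ s, q i ^ αθ = ∑ i ∈ s, (q i ^ α) ^ u * q i ^ (1 - u) :=
        Finset.sum_congr rfl key
    _ ≤ (∑ i ∈ s, q i ^ α) ^ u * (∑ i ∈ s, q i) ^ (1 - u) := by
        apply myHolder s _ _ (fun i hi => Real.rpow_nonneg (hq i hi) α) hq u (1 - u)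
          (le_of_lt hu) (by linarith) (by ring)
    _ = (∑ i ∈ s, q i ^ α) ^ u := by rw [hq1, Real.one_rpow, mul_one]
/-- Interpolation at the level of `G`. -/
lemma myGInterp {ι κ : Type*} [Fintype ι] (T : Finset κ) (w : κ → ℝ) (q : ι → κ → ℝ)
    (hw : ∀ y ∈ T, 0 < w y) (hwsum : ∑ y ∈ T, w y = 1)
    (hq : ∀ x y, 0 ≤ q x y) (hqsum : ∀ y ∈ T, ∑ x, q x y = 1)
    (β : ℝ) (hβ : 0 < β)
    (α αθ θ : ℝ) (hα : 0 < α) (hαθ : 0 < αθ) (hθ : 0 < θ) (hθ1 : θ ≤ 1)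
    (hrel : θ * αθ + (1 - θ) * (α * αθ) = α) :
    (∑ y ∈ T, w y * (∑ x, q x y ^ αθ) ^ (β / αθ))
      ≤ (∑ y ∈ T, w y * (∑ x, q x y ^ α) ^ (β / α)) ^ θ := by
  have hα' : α ≠ 0 := ne_of_gt hα
  have hαθ' : αθ ≠ 0 := ne_of_gt hαθ
  set u : ℝ := θ * αθ / α with hu_def
  have hupos : 0 < u := by positivity
  have h1 : u * α = θ * αθ := by rw [hu_def]; field_simp
  have h2 : u = 1 - (1 - θ) * αθ := by
    rw [hu_def, eq_sub_iff_add_eq, div_add' _ _ _ hα', div_eq_one_iff_eq hα']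
    nlinarith [hrel]
  have hkey : u * α + (1 - u) = αθ := by rw [h1, h2]; ring
  have hu1 : u ≤ 1 := by nlinarith [mul_nonneg (by linarith : (0:ℝ) ≤ 1 - θ) (le_of_lt hαθ)]
  have hCnn : ∀ y, (0:ℝ) ≤ (∑ x, q x y ^ α) ^ (β / α) := fun y =>
    Real.rpow_nonneg (Finset.sum_nonneg fun x _ => Real.rpow_nonneg (hq x y) α) _
  have step1 : ∀ y ∈ T, (∑ x, q x y ^ αθ) ^ (β / αθ)
      ≤ ((∑ x, q x y ^ α) ^ (β / α)) ^ θ := by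
    intro y hy
    have hA : ∑ x, q x y ^ αθ ≤ (∑ x, q x y ^ α) ^ u :=
      mySumRpowInterp Finset.univ (fun x => q x y) (fun x _ => hq x y) (hqsum y hy)
        α αθ u hα hαθ hupos hu1 hkey
    have hAnn : (0:ℝ) ≤ ∑ x, q x y ^ α :=
      Finset.sum_nonneg fun x _ => Real.rpow_nonneg (hq x y) α
    have h3 : (∑ x, q x y ^ αθ) ^ (β / αθ) ≤ ((∑ x, q x y ^ α) ^ u) ^ (β / αθ) :=
      Real.rpow_le_rpow (Finset.sum_nonneg fun x _ => Real.rpow_nonneg (hq x y) αθ)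
        hA (by positivity)
    refine h3.trans_eq ?_
    rw [← Real.rpow_mul hAnn, ← Real.rpow_mul hAnn]
    congr 1
    rw [hu_def]
    field_simp
  calc ∑ y ∈ T, w y * (∑ x, q x y ^ αθ) ^ (β / αθ)
      ≤ ∑ y ∈ T, w y * ((∑ x, q x y ^ α) ^ (β / α)) ^ θ := by
        apply Finset.sum_le_sum; intro y hy
        exact mul_le_mul_of_nonneg_left (step1 y hy) (le_of_lt (hw y hy))
    _ = ∑ y ∈ T, (w y * (∑ x, q x y ^ α) ^ (β / α)) ^ θ * w y ^ (1 - θ) := by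
        apply Finset.sum_congr rfl; intro y hy
        rw [Real.mul_rpow (le_of_lt (hw y hy)) (hCnn y), mul_comm (w y ^ θ) _, mul_assoc,
          ← Real.rpow_add (hw y hy)]
        norm_num
        ring
    _ ≤ (∑ y ∈ T, w y * (∑ x, q x y ^ α) ^ (β / α)) ^ θ * (∑ y ∈ T, w y) ^ (1 - θ) := by
        apply myHolder T _ _ (fun y hy => mul_nonneg (le_of_lt (hw y hy)) (hCnn y))
          (fun y hy => le_of_lt (hw y hy)) θ (1 - θ) (le_of_lt hθ) (by linarith) (by ring)
    _ = (∑ y ∈ T, w y * (∑ x, q x y ^ α) ^ (β / α)) ^ θ := by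
        rw [hwsum, Real.one_rpow, mul_one]

/-- Tangent bound at the level of `G`. -/
lemma myGTangent {ι κ : Type*} [Fintype ι] (T : Finset κ) (w : κ → ℝ) (q : ι → κ → ℝ)
    (hw : ∀ y ∈ T, 0 < w y) (hwsum : ∑ y ∈ T, w y = 1)
    (hq : ∀ x y, 0 ≤ q x y) (hqsum : ∀ y ∈ T, ∑ x, q x y = 1)
    (β : ℝ) (hβ : 0 < β) (α : ℝ) (hα : 0 < α) :
    Real.exp (β * ((α - 1) / α) * ∑ y ∈ T, w y * ∑ x, q x y * Real.log (q x y))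
      ≤ ∑ y ∈ T, w y * (∑ x, q x y ^ α) ^ (β / α) := by
  have hc : (0:ℝ) < β / α := by positivity
  have step1 : ∀ y ∈ T, Real.exp ((α - 1) * (β / α) * ∑ x, q x y * Real.log (q x y))
      ≤ (∑ x, q x y ^ α) ^ (β / α) := by
    intro y hy
    have h1 : Real.exp ((α - 1) * ∑ x, q x y * Real.log (q x y)) ≤ ∑ x, q x y ^ α :=
      mySumRpowGe Finset.univ (fun x => q x y) (fun x _ => hq x y) (hqsum y hy) α hα
    have h2 := Real.rpow_le_rpow (le_of_lt (Real.exp_pos _)) h1 (le_of_lt hc)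
    rw [← Real.exp_mul] at h2
    refine le_trans (le_of_eq ?_) h2
    congr 1
    ring
  calc Real.exp (β * ((α - 1) / α) * ∑ y ∈ T, w y * ∑ x, q x y * Real.log (q x y))
      = Real.exp (∑ y ∈ T, w y * ((α - 1) * (β / α) * ∑ x, q x y * Real.log (q x y))) := by
        congr 1
        rw [Finset.mul_sum]
        apply Finset.sum_congr rfl; intro y _
        ring
    _ ≤ ∑ y ∈ T, w y * Real.exp ((α - 1) * (β / α) * ∑ x, q x y * Real.log (q x y)) :=
        myJensenExp T w _ (fun y hy => le_of_lt (hw y hy)) hwsum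
    _ ≤ ∑ y ∈ T, w y * (∑ x, q x y ^ α) ^ (β / α) := by
        apply Finset.sum_le_sum; intro y hy
        exact mul_le_mul_of_nonneg_left (step1 y hy) (le_of_lt (hw y hy))

noncomputable section

variable {𝓧 𝓨 : Type*} [Fintype 𝓧] [Fintype 𝓨]

/-- Shannon conditional entropy `H(X|Y)`. -/
def shannonCond (P : 𝓧 × 𝓨 → ℝ) : ℝ :=
  -∑ p, if 0 < P p then P p * Real.logb 2 (pCond P p.1 p.2) else 0

/-- Two-parameter Rényi conditional entropy, continuously extended at `α = 1`. -/
def HtildeE (P : 𝓧 × 𝓨 → ℝ) (α β : ℝ) : ℝ :=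
  if α = 1 then shannonCond P else Htilde P α β

/-- for fixed `β ∈ (0,∞)`, `α ↦ H̃_{α,β}(X|Y)` is non-increasing
on `(0,∞)`. -/
theorem HtildeE_antitone_in_alpha
    [Nonempty 𝓧] [Nonempty 𝓨]
    (P : 𝓧 × 𝓨 → ℝ) (hP : ∀ p, 0 ≤ P p) (hPsum : ∑ p, P p = 1)
    (β : ℝ) (hβ : 0 < β) :
    ∀ a b : ℝ, 0 < b → b ≤ a → HtildeE P a β ≤ HtildeE P b β := by
  classical
  have hβ' : β ≠ 0 := ne_of_gt hβ
  set T : Finset 𝓨 := Finset.univ.filter (fun y => 0 < pY P y) with hT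
  have hpY0 : ∀ y, 0 ≤ pY P y := fun y => Finset.sum_nonneg fun x _ => hP (x, y)
  have hw : ∀ y ∈ T, 0 < pY P y := by
    intro y hy
    exact (Finset.mem_filter.1 hy).2
  have hpYtot : ∑ y, pY P y = 1 := by
    rw [← hPsum, Fintype.sum_prod_type_right]
    rfl
  have hwsum : ∑ y ∈ T, pY P y = 1 := by
    rw [hT, Finset.sum_filter, ← hpYtot]
    apply Finset.sum_congr rfl
    intro y _
    by_cases h : 0 < pY P y
    · rw [if_pos h]
    · rw [if_neg h]
      exact (le_antisymm (not_lt.1 h) (hpY0 y)).symm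
  have hq0 : ∀ x y, 0 ≤ pCond P x y := fun x y => div_nonneg (hP (x, y)) (hpY0 y)
  have hqsum : ∀ y ∈ T, ∑ x, pCond P x y = 1 := by
    intro y hy
    have hpos := hw y hy
    simp only [pCond]
    rw [← Finset.sum_div]
    exact div_self (ne_of_gt hpos)
  have hTne : T.Nonempty := by
    apply Finset.nonempty_of_sum_ne_zero (f := pY P)
    rw [hwsum]; norm_num
  set Gf : ℝ → ℝ := fun γ => ∑ y ∈ T, pY P y * (∑ x, pCond P x y ^ γ) ^ (β / γ)
    with hGf
  have hApos : ∀ y ∈ T, ∀ γ : ℝ, 0 < ∑ x, pCond P x y ^ γ := by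
    intro y hy γ
    obtain ⟨x0, hx0⟩ : ∃ x, 0 < pCond P x y := by
      by_contra h
      push_neg at h
      have hz : ∑ x, pCond P x y = 0 :=
        Finset.sum_eq_zero fun x _ => le_antisymm (h x) (hq0 x y)
      rw [hqsum y hy] at hz; norm_num at hz
    have h1 : (0:ℝ) < pCond P x0 y ^ γ := Real.rpow_pos_of_pos hx0 γ
    have h2 := Finset.single_le_sum (f := fun x => pCond P x y ^ γ)
      (fun x _ => Real.rpow_nonneg (hq0 x y) γ) (Finset.mem_univ x0)
    linarith
  have hGpos : ∀ γ : ℝ, 0 < Gf γ := fun γ =>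
    Finset.sum_pos
      (fun y hy => mul_pos (hw y hy) (Real.rpow_pos_of_pos (hApos y hy γ) _)) hTne
  have hGfil : ∀ γ : ℝ, Gf γ = ∑ y, if 0 < pY P y then
      pY P y * (∑ x, pCond P x y ^ γ) ^ (β / γ) else 0 := by
    intro γ
    show (∑ y ∈ T, pY P y * (∑ x, pCond P x y ^ γ) ^ (β / γ)) = _
    rw [hT]
    exact Finset.sum_filter _ _
  have hHt : ∀ γ : ℝ, Htilde P γ β = γ / (β * (1 - γ)) * Real.logb 2 (Gf γ) := by
    intro γ
    unfold Htilde
    rw [hGfil γ]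
  have hHtE : ∀ γ : ℝ, γ ≠ 1 →
      HtildeE P γ β = γ / (β * (1 - γ)) * Real.logb 2 (Gf γ) := by
    intro γ h1
    rw [HtildeE, if_neg h1, hHt γ]
  set Ntot : ℝ := ∑ y ∈ T, pY P y * ∑ x, pCond P x y * Real.log (pCond P x y)
    with hNtot
  have hlog2 : (0:ℝ) < Real.log 2 := Real.log_pos (by norm_num)
  have hSN : shannonCond P = -(Ntot / Real.log 2) := by
    unfold shannonCond
    rw [Fintype.sum_prod_type_right]
    have inner : ∀ y, (∑ x, if 0 < P (x, y) then
        P (x, y) * Real.logb 2 (pCond P x y) else 0)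
        = (if 0 < pY P y then
            pY P y * ((∑ x, pCond P x y * Real.log (pCond P x y)) / Real.log 2) else 0) := by
      intro y
      by_cases hy : 0 < pY P y
      · rw [if_pos hy, Finset.sum_div, Finset.mul_sum]
        apply Finset.sum_congr rfl
        intro x _
        by_cases hx : 0 < P (x, y)
        · rw [if_pos hx]
          have hPq : P (x, y) = pY P y * pCond P x y := by
            rw [pCond]; field_simp
          rw [hPq, ← Real.log_div_log]
          ring
        · rw [if_neg hx]
          have hz : P (x, y) = 0 := le_antisymm (not_lt.1 hx) (hP (x, y))
          have hq : pCond P x y = 0 := by rw [pCond, hz, zero_div]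
          rw [hq]
          simp
      · rw [if_neg hy]
        have h0 : pY P y = 0 := le_antisymm (not_lt.1 hy) (hpY0 y)
        have hz : ∀ x ∈ Finset.univ, P (x, y) = 0 := by
          rw [← Finset.sum_eq_zero_iff_of_nonneg (fun x _ => hP (x, y))]
          exact h0
        apply Finset.sum_eq_zero
        intro x hx
        rw [if_neg (by rw [hz x hx]; norm_num)]
    calc -∑ y, (∑ x, if 0 < P (x, y) then P (x, y) * Real.logb 2 (pCond P x y) else 0)
        = -∑ y, (if 0 < pY P y then
            pY P y * ((∑ x, pCond P x y * Real.log (pCond P x y)) / Real.log 2) else 0) := by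
          rw [Finset.sum_congr rfl fun y _ => inner y]
      _ = -∑ y ∈ T, pY P y * ((∑ x, pCond P x y * Real.log (pCond P x y)) / Real.log 2) := by
          rw [hT, Finset.sum_filter]
      _ = -(Ntot / Real.log 2) := by
          rw [hNtot, Finset.sum_div]
          congr 1
          apply Finset.sum_congr rfl
          intro y _
          rw [mul_div_assoc]
  -- (★) tangent bound in logb form
  have hstar : ∀ γ : ℝ, 0 < γ →
      -(β * ((γ - 1) / γ)) * shannonCond P ≤ Real.logb 2 (Gf γ) := by
    intro γ hγ
    have h1 := myGTangent T (pY P) (pCond P) hw hwsum hq0 hqsum β hβ γ hγ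
    have h2 : β * ((γ - 1) / γ) * Ntot ≤ Real.log (Gf γ) :=
      (Real.le_log_iff_exp_le (hGpos γ)).2 h1
    rw [← Real.log_div_log, hSN]
    have heq : -(β * ((γ - 1) / γ)) * -(Ntot / Real.log 2)
        = (β * ((γ - 1) / γ) * Ntot) / Real.log 2 := by ring
    rw [heq]
    exact (div_le_div_iff_of_pos_right hlog2).2 h2
  have stepA : ∀ γ : ℝ, 1 < γ → HtildeE P γ β ≤ shannonCond P := by
    intro γ h1
    rw [hHtE γ (by linarith)]
    have hs := hstar γ (by linarith)
    have hcneg : γ / (β * (1 - γ)) ≤ 0 :=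
      div_nonpos_of_nonneg_of_nonpos (by linarith) (by nlinarith)
    have h2 := mul_le_mul_of_nonpos_left hs hcneg
    refine le_trans h2 (le_of_eq ?_)
    have hγ0 : γ ≠ 0 := by linarith
    have hγ1 : (1:ℝ) - γ ≠ 0 := sub_ne_zero_of_ne (by linarith)
    field_simp
    ring
  have stepB : ∀ γ : ℝ, 0 < γ → γ < 1 → shannonCond P ≤ HtildeE P γ β := by
    intro γ hγ0 h1
    rw [hHtE γ (by linarith)]
    have hs := hstar γ hγ0
    have hcpos : 0 ≤ γ / (β * (1 - γ)) :=
      le_of_lt (div_pos hγ0 (mul_pos hβ (by linarith)))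
    have h2 := mul_le_mul_of_nonneg_left hs hcpos
    refine le_trans (le_of_eq ?_) h2
    have hγ0' : γ ≠ 0 := by linarith
    have hγ1 : (1:ℝ) - γ ≠ 0 := sub_ne_zero_of_ne (by linarith)
    field_simp
    ring
  have stepC : ∀ a' b' : ℝ, 1 < b' → b' ≤ a' → HtildeE P a' β ≤ HtildeE P b' β := by
    intro a' b' hb1 hba'
    have ha1 : 1 < a' := lt_of_lt_of_le hb1 hba'
    set θ := (a' * (b' - 1)) / (b' * (a' - 1)) with hθdef
    have hden : 0 < b' * (a' - 1) := by nlinarith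
    have hθpos : 0 < θ := div_pos (by nlinarith) hden
    have hθ1 : θ ≤ 1 := by rw [hθdef, div_le_one hden]; nlinarith
    have hb0' : b' ≠ 0 := by linarith
    have ha0' : a' ≠ 0 := by linarith
    have hbm1 : b' - 1 ≠ 0 := sub_ne_zero_of_ne (ne_of_gt hb1)
    have ham1 : a' - 1 ≠ 0 := sub_ne_zero_of_ne (ne_of_gt ha1)
    have hrel : θ * b' + (1 - θ) * (a' * b') = a' := by
      rw [hθdef]; field_simp; ring
    have hGle : Gf b' ≤ (Gf a') ^ θ :=
      myGInterp T (pY P) (pCond P) hw hwsum hq0 hqsum β hβ a' b' θ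
        (by linarith) (by linarith) hθpos hθ1 hrel
    have hL : Real.logb 2 (Gf b') ≤ θ * Real.logb 2 (Gf a') := by
      calc Real.logb 2 (Gf b') ≤ Real.logb 2 ((Gf a') ^ θ) :=
            Real.logb_le_logb_of_le (by norm_num) (hGpos b') hGle
        _ = θ * Real.logb 2 (Gf a') := by
            rw [← Real.log_div_log, ← Real.log_div_log, Real.log_rpow (hGpos a')]
            ring
    rw [hHtE a' (by linarith), hHtE b' (by linarith)]
    have hcb : b' / (β * (1 - b')) ≤ 0 :=
      div_nonpos_of_nonneg_of_nonpos (by linarith) (by nlinarith)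
    have h2 := mul_le_mul_of_nonpos_left hL hcb
    have hd1 : β * (1 - a') ≠ 0 := mul_ne_zero hβ' (sub_ne_zero_of_ne (by linarith))
    have hd2 : β * (1 - b') * (b' * (a' - 1)) ≠ 0 :=
      mul_ne_zero (mul_ne_zero hβ' (sub_ne_zero_of_ne (by linarith))) (ne_of_gt hden)
    have hco : a' / (β * (1 - a')) = b' / (β * (1 - b')) * θ := by
      rw [hθdef, div_mul_div_comm, div_eq_div_iff hd1 hd2]
      ring
    calc a' / (β * (1 - a')) * Real.logb 2 (Gf a')
        = b' / (β * (1 - b')) * (θ * Real.logb 2 (Gf a')) := by rw [hco, mul_assoc]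
      _ ≤ b' / (β * (1 - b')) * Real.logb 2 (Gf b') := h2
  have stepD : ∀ a' b' : ℝ, 0 < b' → b' ≤ a' → a' < 1 →
      HtildeE P a' β ≤ HtildeE P b' β := by
    intro a' b' hb0' hba' ha1
    have hb1 : b' < 1 := lt_of_le_of_lt hba' ha1
    set θ := (b' * (1 - a')) / (a' * (1 - b')) with hθdef
    have ha0' : 0 < a' := lt_of_lt_of_le hb0' hba'
    have hden : 0 < a' * (1 - b') := by nlinarith
    have hθpos : 0 < θ := div_pos (by nlinarith) hden
    have hθ1 : θ ≤ 1 := by rw [hθdef, div_le_one hden]; nlinarith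
    have hb0'' : b' ≠ 0 := by linarith
    have ha0'' : a' ≠ 0 := by linarith
    have hbm1 : (1:ℝ) - b' ≠ 0 := sub_ne_zero_of_ne (by linarith)
    have ham1 : (1:ℝ) - a' ≠ 0 := sub_ne_zero_of_ne (by linarith)
    have hrel : θ * a' + (1 - θ) * (b' * a') = b' := by
      rw [hθdef]; field_simp; ring
    have hGle : Gf a' ≤ (Gf b') ^ θ :=
      myGInterp T (pY P) (pCond P) hw hwsum hq0 hqsum β hβ b' a' θ
        hb0' ha0' hθpos hθ1 hrel
    have hL : Real.logb 2 (Gf a') ≤ θ * Real.logb 2 (Gf b') := by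
      calc Real.logb 2 (Gf a') ≤ Real.logb 2 ((Gf b') ^ θ) :=
            Real.logb_le_logb_of_le (by norm_num) (hGpos a') hGle
        _ = θ * Real.logb 2 (Gf b') := by
            rw [← Real.log_div_log, ← Real.log_div_log, Real.log_rpow (hGpos b')]
            ring
    rw [hHtE a' (by linarith), hHtE b' (by linarith)]
    have hca : 0 ≤ a' / (β * (1 - a')) :=
      le_of_lt (div_pos ha0' (mul_pos hβ (by linarith)))
    have h2 := mul_le_mul_of_nonneg_left hL hca
    have hd1 : β * (1 - b') ≠ 0 := mul_ne_zero hβ' (sub_ne_zero_of_ne (by linarith))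
    have hd2 : β * (1 - a') * (a' * (1 - b')) ≠ 0 :=
      mul_ne_zero (mul_ne_zero hβ' (sub_ne_zero_of_ne (by linarith))) (ne_of_gt hden)
    have hco : b' / (β * (1 - b')) = a' / (β * (1 - a')) * θ := by
      rw [hθdef, div_mul_div_comm, div_eq_div_iff hd1 hd2]
      ring
    calc a' / (β * (1 - a')) * Real.logb 2 (Gf a')
        ≤ a' / (β * (1 - a')) * (θ * Real.logb 2 (Gf b')) := h2
      _ = b' / (β * (1 - b')) * Real.logb 2 (Gf b') := by rw [hco, mul_assoc]
  intro a b hb0 hba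
  rcases lt_trichotomy b 1 with hb1 | hb1 | hb1
  · rcases lt_trichotomy a 1 with ha1 | ha1 | ha1
    · exact stepD a b hb0 hba ha1
    · rw [ha1, show HtildeE P 1 β = shannonCond P from by rw [HtildeE, if_pos rfl]]
      exact stepB b hb0 hb1
    · exact le_trans (stepA a ha1) (stepB b hb0 hb1)
  · rw [hb1, show HtildeE P 1 β = shannonCond P from by rw [HtildeE, if_pos rfl]]
    have h1a : (1:ℝ) ≤ a := by rw [← hb1]; exact hba
    rcases eq_or_lt_of_le h1a with ha1 | ha1
    · rw [← ha1, show HtildeE P 1 β = shannonCond P from by rw [HtildeE, if_pos rfl]]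
    · exact stepA a ha1
  · exact stepC a b hb1 hba
end
end

section
/- Monotonicity of the two-parameter Rényi conditional entropy in β: (1) for every fixed α ∈ (1,∞), the map β ↦ H̃_{α,β}(X|Y) is non-increasing on (0,∞); (2) for every fixed α ∈ (0,1), the map β ↦ H̃_{α,β}(X|Y) is non-decreasing on (0,∞). -/
open scoped BigOperators

noncomputable section

variable {𝓧 𝓨 : Type*} [Fintype 𝓧] [Fintype 𝓨]

/-- Key monotonicity: `β ↦ (1/β) · logb 2 (∑_y P_Y(y) S_y^{β/α})` is non-decreasing. -/
theorem Htilde_key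
    (P : 𝓧 × 𝓨 → ℝ) (hP : ∀ p, 0 ≤ P p) (hPsum : ∑ p, P p = 1)
    {α b₁ b₂ : ℝ} (hα : 0 < α) (hb₁ : 0 < b₁) (hb : b₁ ≤ b₂) :
    Real.logb 2 (∑ y, if 0 < pY P y then
      pY P y * (∑ x, pCond P x y ^ α) ^ (b₁ / α) else 0) / b₁ ≤
    Real.logb 2 (∑ y, if 0 < pY P y then
      pY P y * (∑ x, pCond P x y ^ α) ^ (b₂ / α) else 0) / b₂ := by
  have hb₂ : 0 < b₂ := hb₁.trans_le hb
  set w : 𝓨 → ℝ := fun y => if 0 < pY P y then pY P y else 0 with hw_def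
  set z : 𝓨 → ℝ := fun y => (∑ x, pCond P x y ^ α) ^ (b₁ / α) with hz_def
  have hpYnn : ∀ y, 0 ≤ pY P y := fun y => Finset.sum_nonneg fun x _ => hP _
  have hSnn : ∀ y, (0:ℝ) ≤ ∑ x, pCond P x y ^ α := fun y =>
    Finset.sum_nonneg fun x _ => Real.rpow_nonneg (div_nonneg (hP _) (hpYnn y)) _
  have hsum : ∑ y, pY P y = 1 := by
    simp only [pY]
    rw [Finset.sum_comm, ← Fintype.sum_prod_type]
    exact hPsum
  have hw : ∀ y ∈ Finset.univ (α := 𝓨), 0 ≤ w y := by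
    intro y _
    simp only [hw_def]
    split
    · exact hpYnn y
    · exact le_rfl
  have hw' : ∑ y, w y = 1 := by
    have h1 : ∑ y, w y = ∑ y, pY P y := by
      refine Finset.sum_congr rfl fun y _ => ?_
      simp only [hw_def]
      split
      · rfl
      · next h => exact ((not_lt.1 h).antisymm (hpYnn y)).symm ▸ rfl
    rw [h1, hsum]
  have hz : ∀ y ∈ Finset.univ (α := 𝓨), 0 ≤ z y := fun y _ => Real.rpow_nonneg (hSnn y) _
  set p : ℝ := b₂ / b₁ with hp_def
  have hp : 1 ≤ p := (one_le_div hb₁).2 hb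
  have hA₁ : (∑ y, if 0 < pY P y then pY P y * (∑ x, pCond P x y ^ α) ^ (b₁ / α) else 0)
      = ∑ y, w y * z y := by
    refine Finset.sum_congr rfl fun y _ => ?_
    simp only [hw_def, hz_def]
    split <;> simp
  have hA₂ : (∑ y, if 0 < pY P y then pY P y * (∑ x, pCond P x y ^ α) ^ (b₂ / α) else 0)
      = ∑ y, w y * z y ^ p := by
    refine Finset.sum_congr rfl fun y _ => ?_
    have hz' : z y ^ p = (∑ x, pCond P x y ^ α) ^ (b₂ / α) := by
      rw [hz_def, ← Real.rpow_mul (hSnn y)]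
      congr 1
      field_simp
      rw [hp_def]
      field_simp
    rw [hz']
    simp only [hw_def]
    split <;> simp
  have hJ : (∑ y, w y * z y) ^ p ≤ ∑ y, w y * z y ^ p :=
    Real.rpow_arith_mean_le_arith_mean_rpow Finset.univ w z hw hw' hz hp
  -- positivity
  obtain ⟨y₀, hy₀⟩ : ∃ y, 0 < pY P y := by
    by_contra h
    push_neg at h
    have : ∑ y, pY P y = 0 :=
      Finset.sum_eq_zero fun y _ => le_antisymm (h y) (hpYnn y)
    rw [hsum] at this
    norm_num at this
  obtain ⟨x₀, hx₀⟩ : ∃ x, 0 < P (x, y₀) := by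
    by_contra h
    push_neg at h
    have : pY P y₀ = 0 := Finset.sum_eq_zero fun x _ => le_antisymm (h x) (hP _)
    exact absurd this hy₀.ne'
  have hSpos : (0:ℝ) < ∑ x, pCond P x y₀ ^ α := by
    refine Finset.sum_pos' (fun x _ => Real.rpow_nonneg (div_nonneg (hP _) (hpYnn y₀)) _)
      ⟨x₀, Finset.mem_univ _, Real.rpow_pos_of_pos (div_pos hx₀ hy₀) _⟩
  have hA₁pos : (0:ℝ) < ∑ y, w y * z y := by
    refine Finset.sum_pos' (fun y _ => mul_nonneg (hw y (Finset.mem_univ y))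
      (hz y (Finset.mem_univ y))) ⟨y₀, Finset.mem_univ _, ?_⟩
    have hwy : w y₀ = pY P y₀ := if_pos hy₀
    rw [hwy]
    exact mul_pos hy₀ (Real.rpow_pos_of_pos hSpos _)
  have hA₂pos : (0:ℝ) < ∑ y, w y * z y ^ p :=
    lt_of_lt_of_le (Real.rpow_pos_of_pos hA₁pos p) hJ
  -- take logs
  have hlog : p * Real.log (∑ y, w y * z y) ≤ Real.log (∑ y, w y * z y ^ p) := by
    have := Real.log_le_log (Real.rpow_pos_of_pos hA₁pos p) hJ
    rwa [Real.log_rpow hA₁pos] at this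
  have h2 : Real.log (∑ y, w y * z y) / b₁ ≤ Real.log (∑ y, w y * z y ^ p) / b₂ := by
    have heq : Real.log (∑ y, w y * z y) / b₁
        = p * Real.log (∑ y, w y * z y) / b₂ := by
      rw [hp_def]; field_simp
    rw [heq]
    exact div_le_div_of_nonneg_right hlog hb₂.le |>.trans_eq rfl
  rw [hA₁, hA₂]
  have hlog2 : (0:ℝ) < Real.log 2 := Real.log_pos one_lt_two
  calc Real.logb 2 (∑ y, w y * z y) / b₁
      = (Real.log (∑ y, w y * z y) / b₁) / Real.log 2 := by
        rw [Real.logb]; ring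
    _ ≤ (Real.log (∑ y, w y * z y ^ p) / b₂) / Real.log 2 := by
        exact div_le_div_of_nonneg_right h2 hlog2.le |>.trans_eq rfl
    _ = Real.logb 2 (∑ y, w y * z y ^ p) / b₂ := by
        rw [Real.logb]; ring

/-- monotonicity of `H̃_{α,β}(X|Y)` in `β`: non-increasing for
`α ∈ (1,∞)`, non-decreasing for `α ∈ (0,1)`. -/
theorem Htilde_monotone_in_beta
    [Nonempty 𝓧] [Nonempty 𝓨]
    (P : 𝓧 × 𝓨 → ℝ) (hP : ∀ p, 0 ≤ P p) (hPsum : ∑ p, P p = 1)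
    (α : ℝ) :
    (1 < α → ∀ b₁ b₂ : ℝ, 0 < b₁ → b₁ ≤ b₂ → Htilde P α b₂ ≤ Htilde P α b₁) ∧
    (0 < α → α < 1 → ∀ b₁ b₂ : ℝ, 0 < b₁ → b₁ ≤ b₂ →
      Htilde P α b₁ ≤ Htilde P α b₂) := by
  have hrw : ∀ β L : ℝ, α / (β * (1 - α)) * L = (α / (1 - α)) * (L / β) := by
    intro β L; field_simp
  constructor
  · intro hα b₁ b₂ hb₁ hb
    have hkey := Htilde_key P hP hPsum (by linarith : (0:ℝ) < α) hb₁ hb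
    have hfac : α / (1 - α) ≤ 0 :=
      (div_nonpos_iff.2 (Or.inl ⟨by linarith, by linarith⟩))
    simp only [Htilde, hrw]
    exact mul_le_mul_of_nonpos_left hkey hfac
  · intro hα hα1 b₁ b₂ hb₁ hb
    have hkey := Htilde_key P hP hPsum hα hb₁ hb
    have hfac : 0 ≤ α / (1 - α) := le_of_lt (div_pos hα (by linarith))
    simp only [Htilde, hrw]
    exact mul_le_mul_of_nonneg_left hkey hfac
end
end

section
/- Monotonicity of the two-parameter Rényi conditional entropy under discarding information: let P_XYZ be a probability distribution on 𝒳×𝒴×𝒵. For all α, β ∈ (0,∞), H̃_{α,β}(XY|Z)_{P_XYZ} ≥ H̃_{α,β}(Y|Z)_{P_YZ}, where H̃_{α,β}(XY|Z) is computed treating (X,Y) as the joint variable on 𝒳×𝒴 conditioned on Z, and P_YZ is the marginal of P_XYZ on 𝒴×𝒵. -/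
open scoped BigOperators

noncomputable section

variable {𝓧 𝓨 : Type*} [Fintype 𝓧] [Fintype 𝓨]

/-! Discarding `X` merges, for each `(y, z)`, the conditional masses `P(x, y | z)` into their
sum `P(y | z)`. On `[0, ∞)` the map `t ↦ t ^ α` is subadditive for `α ≤ 1` and superadditive for
`α ≥ 1`, so merging lowers `∑ P(· | z) ^ α` in the first case and raises it in the second; the
prefactor `α / (β (1 - α))` has exactly the sign that turns either inequality into
`H̃(XY|Z) ≥ H̃(Y|Z)`. At `α = 1` the same comparison is the termwise bound
`P(x, y | z) ≤ P(y | z)` inside the logarithm. -/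

open Finset Real

theorem rpow_sum_le_sum_rpow_of_le_one {ι : Type*} (s : Finset ι) {f : ι → ℝ}
    (hf : ∀ i ∈ s, 0 ≤ f i) {p : ℝ} (hp : 0 < p) (hp1 : p ≤ 1) :
    (∑ i ∈ s, f i) ^ p ≤ ∑ i ∈ s, f i ^ p :=
  le_sum_of_subadditive_on_pred (· ^ p) (0 ≤ ·) (zero_rpow hp.ne').le
    (fun _ _ hx hy => rpow_add_le_add_rpow hx hy hp.le hp1) (fun _ _ => add_nonneg) f hf

theorem sum_rpow_le_rpow_sum_of_one_le {ι : Type*} (s : Finset ι) {f : ι → ℝ}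
    (hf : ∀ i ∈ s, 0 ≤ f i) {p : ℝ} (hp1 : 1 ≤ p) :
    ∑ i ∈ s, f i ^ p ≤ (∑ i ∈ s, f i) ^ p :=
  le_sum_of_subadditive_on_pred (N := ℝᵒᵈ) (fun x => OrderDual.toDual (x ^ p)) (0 ≤ ·)
    (zero_rpow (by linarith)).ge
    (fun _ _ hx hy => add_rpow_le_rpow_add hx hy hp1) (fun _ _ => add_nonneg) f hf

theorem mul_logb_div_le_mul_logb_div {a b c : ℝ} (ha : 0 ≤ a) (hab : a ≤ b) (hc : 0 ≤ c) :
    a * logb 2 (a / c) ≤ a * logb 2 (b / c) := by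
  rcases ha.eq_or_lt with rfl | ha
  · simp
  rcases hc.eq_or_lt with rfl | hc
  · simp
  gcongr
  norm_num

section ConditionalEntropy

variable {𝓦 𝓥 𝓩 : Type*} [Fintype 𝓦] [Fintype 𝓥]

theorem pY_nonneg_s9 {P : 𝓦 × 𝓩 → ℝ} (hP : ∀ p, 0 ≤ P p) (z : 𝓩) : 0 ≤ pY P z :=
  sum_nonneg fun _ _ => hP _

theorem pCond_nonneg_s9 {P : 𝓦 × 𝓩 → ℝ} (hP : ∀ p, 0 ≤ P p) (w : 𝓦) (z : 𝓩) :
    0 ≤ pCond P w z :=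
  div_nonneg (hP _) (pY_nonneg_s9 hP z)

theorem shannonCond_eq_of_nonneg [Fintype 𝓩] {P : 𝓦 × 𝓩 → ℝ} (hP : ∀ p, 0 ≤ P p) :
    shannonCond P = -∑ p, P p * logb 2 (pCond P p.1 p.2) := by
  refine congrArg Neg.neg (sum_congr rfl fun p _ => ?_)
  rcases (hP p).eq_or_lt with h | h
  · simp [← h]
  · exact if_pos h

def condPowSum (P : 𝓦 × 𝓩 → ℝ) (α : ℝ) (z : 𝓩) : ℝ := ∑ w, pCond P w z ^ α

def renyiSum [Fintype 𝓩] (P : 𝓦 × 𝓩 → ℝ) (α β : ℝ) : ℝ :=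
  ∑ z, if 0 < pY P z then pY P z * condPowSum P α z ^ (β / α) else 0

theorem Htilde_eq_mul_logb_renyiSum [Fintype 𝓩] (P : 𝓦 × 𝓩 → ℝ) (α β : ℝ) :
    Htilde P α β = α / (β * (1 - α)) * logb 2 (renyiSum P α β) :=
  rfl

theorem condPowSum_pos {P : 𝓦 × 𝓩 → ℝ} (hP : ∀ p, 0 ≤ P p) (α : ℝ) {z : 𝓩}
    (hz : 0 < pY P z) : 0 < condPowSum P α z := by
  obtain ⟨w, -, hw⟩ := exists_lt_of_sum_lt (s := univ) (f := fun _ => (0 : ℝ))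
    (g := fun w => P (w, z)) (by rw [sum_const_zero]; exact hz)
  exact sum_pos' (fun w _ => rpow_nonneg (pCond_nonneg_s9 hP w z) α)
    ⟨w, mem_univ w, rpow_pos_of_pos (div_pos hw hz) α⟩

variable [Fintype 𝓩]

theorem renyiSum_pos {P : 𝓦 × 𝓩 → ℝ} (hP : ∀ p, 0 ≤ P p) (α β : ℝ) (h : ∃ z, 0 < pY P z) :
    0 < renyiSum P α β := by
  obtain ⟨z, hz⟩ := h
  refine sum_pos' (fun z _ => ?_) ⟨z, mem_univ z, ?_⟩
  · split_ifs with hz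
    · exact mul_nonneg hz.le (rpow_nonneg (condPowSum_pos hP α hz).le _)
    · exact le_rfl
  · rw [if_pos hz]
    exact mul_pos hz (rpow_pos_of_pos (condPowSum_pos hP α hz) _)

theorem renyiSum_eq_zero {P : 𝓦 × 𝓩 → ℝ} (α β : ℝ) (h : ∀ z, pY P z ≤ 0) :
    renyiSum P α β = 0 :=
  sum_eq_zero fun z _ => if_neg (h z).not_gt

theorem renyiSum_le_renyiSum {P : 𝓦 × 𝓩 → ℝ} {Q : 𝓥 × 𝓩 → ℝ} (hP : ∀ p, 0 ≤ P p)
    (hpY : pY P = pY Q) {α β : ℝ} (hαβ : 0 ≤ β / α)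
    (h : ∀ z, 0 < pY P z → condPowSum P α z ≤ condPowSum Q α z) :
    renyiSum P α β ≤ renyiSum Q α β := by
  refine sum_le_sum fun z _ => ?_
  rw [← hpY]
  split_ifs with hz
  · gcongr
    · exact (condPowSum_pos hP α hz).le
    · exact h z hz
  · exact le_rfl

theorem logb_renyiSum_le_logb_renyiSum {P : 𝓦 × 𝓩 → ℝ} {Q : 𝓥 × 𝓩 → ℝ}
    (hP : ∀ p, 0 ≤ P p) (hpY : pY P = pY Q) {α β : ℝ} (hαβ : 0 ≤ β / α)
    (h : ∀ z, 0 < pY P z → condPowSum P α z ≤ condPowSum Q α z) :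
    logb 2 (renyiSum P α β) ≤ logb 2 (renyiSum Q α β) := by
  by_cases hz : ∃ z, 0 < pY P z
  · exact logb_le_logb_of_le one_lt_two (renyiSum_pos hP α β hz)
      (renyiSum_le_renyiSum hP hpY hαβ h)
  · simp only [not_exists, not_lt] at hz
    rw [renyiSum_eq_zero α β hz, renyiSum_eq_zero α β (hpY ▸ hz)]

end ConditionalEntropy

section Discarding

variable {𝓤 𝓥 𝓩 : Type*} [Fintype 𝓤]

def discardFst (P : (𝓤 × 𝓥) × 𝓩 → ℝ) : 𝓥 × 𝓩 → ℝ := fun q => ∑ x, P ((x, q.1), q.2)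

theorem le_discardFst {P : (𝓤 × 𝓥) × 𝓩 → ℝ} (hP : ∀ p, 0 ≤ P p) (x : 𝓤) (q : 𝓥 × 𝓩) :
    P ((x, q.1), q.2) ≤ discardFst P q :=
  single_le_sum (f := fun x => P ((x, q.1), q.2)) (fun _ _ => hP _) (mem_univ x)

theorem discardFst_nonneg {P : (𝓤 × 𝓥) × 𝓩 → ℝ} (hP : ∀ p, 0 ≤ P p) (q : 𝓥 × 𝓩) :
    0 ≤ discardFst P q :=
  sum_nonneg fun _ _ => hP _

variable [Fintype 𝓥]

theorem pY_discardFst (P : (𝓤 × 𝓥) × 𝓩 → ℝ) : pY (discardFst P) = pY P := by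
  funext z
  simp only [pY, discardFst, Fintype.sum_prod_type]
  exact sum_comm

theorem pCond_discardFst (P : (𝓤 × 𝓥) × 𝓩 → ℝ) (y : 𝓥) (z : 𝓩) :
    pCond (discardFst P) y z = ∑ x, pCond P (x, y) z := by
  rw [pCond, pY_discardFst, discardFst, sum_div]
  rfl

theorem condPowSum_eq_sum_sum (P : (𝓤 × 𝓥) × 𝓩 → ℝ) (α : ℝ) (z : 𝓩) :
    condPowSum P α z = ∑ y, ∑ x, pCond P (x, y) z ^ α := by
  rw [condPowSum, Fintype.sum_prod_type, sum_comm]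

theorem condPowSum_discardFst (P : (𝓤 × 𝓥) × 𝓩 → ℝ) (α : ℝ) (z : 𝓩) :
    condPowSum (discardFst P) α z = ∑ y, (∑ x, pCond P (x, y) z) ^ α := by
  simp only [condPowSum, pCond_discardFst]

theorem condPowSum_discardFst_le {P : (𝓤 × 𝓥) × 𝓩 → ℝ} (hP : ∀ p, 0 ≤ P p) {α : ℝ}
    (hα : 0 < α) (hα1 : α ≤ 1) (z : 𝓩) :
    condPowSum (discardFst P) α z ≤ condPowSum P α z := by
  rw [condPowSum_discardFst, condPowSum_eq_sum_sum]
  exact sum_le_sum fun y _ =>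
    rpow_sum_le_sum_rpow_of_le_one _ (fun x _ => pCond_nonneg_s9 hP (x, y) z) hα hα1

theorem condPowSum_le_condPowSum_discardFst {P : (𝓤 × 𝓥) × 𝓩 → ℝ} (hP : ∀ p, 0 ≤ P p)
    {α : ℝ} (hα1 : 1 ≤ α) (z : 𝓩) :
    condPowSum P α z ≤ condPowSum (discardFst P) α z := by
  rw [condPowSum_discardFst, condPowSum_eq_sum_sum]
  exact sum_le_sum fun y _ =>
    sum_rpow_le_rpow_sum_of_one_le _ (fun x _ => pCond_nonneg_s9 hP (x, y) z) hα1

variable [Fintype 𝓩]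

theorem sum_discardFst (P : (𝓤 × 𝓥) × 𝓩 → ℝ) : ∑ q, discardFst P q = ∑ p, P p := by
  simp only [discardFst, Fintype.sum_prod_type]
  exact (sum_comm.trans (sum_congr rfl fun _ _ => sum_comm)).symm

theorem shannonCond_discardFst_le {P : (𝓤 × 𝓥) × 𝓩 → ℝ} (hP : ∀ p, 0 ≤ P p) :
    shannonCond (discardFst P) ≤ shannonCond P := by
  rw [shannonCond_eq_of_nonneg hP, shannonCond_eq_of_nonneg (discardFst_nonneg hP),
    neg_le_neg_iff, ← sum_discardFst]
  refine sum_le_sum fun q _ => ?_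
  calc ∑ x, P ((x, q.1), q.2) * logb 2 (pCond P (x, q.1) q.2)
      ≤ ∑ x, P ((x, q.1), q.2) * logb 2 (pCond (discardFst P) q.1 q.2) :=
        sum_le_sum fun x _ => by
          rw [pCond, pCond, pY_discardFst]
          exact mul_logb_div_le_mul_logb_div (hP _) (le_discardFst hP x q) (pY_nonneg_s9 hP q.2)
    _ = discardFst P q * logb 2 (pCond (discardFst P) q.1 q.2) := (sum_mul _ _ _).symm

theorem HtildeE_discardFst_le {P : (𝓤 × 𝓥) × 𝓩 → ℝ} (hP : ∀ p, 0 ≤ P p) {α β : ℝ}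
    (hα : 0 < α) (hβ : 0 < β) : HtildeE (discardFst P) α β ≤ HtildeE P α β := by
  have hαβ : 0 ≤ β / α := by positivity
  unfold HtildeE
  split_ifs with hα1
  · exact shannonCond_discardFst_le hP
  rw [Htilde_eq_mul_logb_renyiSum, Htilde_eq_mul_logb_renyiSum]
  rcases lt_or_gt_of_ne hα1 with hlt | hgt
  · have hcoeff : 0 ≤ α / (β * (1 - α)) := div_nonneg hα.le (mul_pos hβ (by linarith [hlt])).le
    exact mul_le_mul_of_nonneg_left (logb_renyiSum_le_logb_renyiSum (discardFst_nonneg hP)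
      (pY_discardFst P) hαβ fun z _ => condPowSum_discardFst_le hP hα hlt.le z) hcoeff
  · have hcoeff : α / (β * (1 - α)) ≤ 0 :=
      div_nonpos_of_nonneg_of_nonpos hα.le
        (mul_nonpos_of_nonneg_of_nonpos hβ.le (by linarith [hgt]))
    exact mul_le_mul_of_nonpos_left (logb_renyiSum_le_logb_renyiSum hP (pY_discardFst P).symm
      hαβ fun z _ => condPowSum_le_condPowSum_discardFst hP hgt.le z) hcoeff

end Discarding

theorem HtildeE_discarding_general
    {𝓩 : Type*} [Fintype 𝓩]
    (P : 𝓧 × 𝓨 × 𝓩 → ℝ) (hP : ∀ p, 0 ≤ P p)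
    (α β : ℝ) (hα : 0 < α) (hβ : 0 < β) :
    HtildeE (fun p : (𝓧 × 𝓨) × 𝓩 => P (p.1.1, p.1.2, p.2)) α β ≥
      HtildeE (fun q : 𝓨 × 𝓩 => ∑ x, P (x, q.1, q.2)) α β :=
  HtildeE_discardFst_le (P := fun p : (𝓧 × 𝓨) × 𝓩 => P (p.1.1, p.1.2, p.2))
    (fun _ => hP _) hα hβ

/-- monotonicity under discarding information:
`H̃_{α,β}(XY|Z) ≥ H̃_{α,β}(Y|Z)` for all `α, β ∈ (0,∞)`. -/
theorem HtildeE_discarding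
    {𝓩 : Type*} [Fintype 𝓩] [Nonempty 𝓧] [Nonempty 𝓨] [Nonempty 𝓩]
    (P : 𝓧 × 𝓨 × 𝓩 → ℝ) (hP : ∀ p, 0 ≤ P p) (hPsum : ∑ p, P p = 1)
    (α β : ℝ) (hα : 0 < α) (hβ : 0 < β) :
    HtildeE (fun p : (𝓧 × 𝓨) × 𝓩 => P (p.1.1, p.1.2, p.2)) α β ≥
      HtildeE (fun q : 𝓨 × 𝓩 => ∑ x, P (x, q.1, q.2)) α β :=
  HtildeE_discarding_general P hP α β hα hβ
end
end
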